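/- arXiv:0801.4731 — 2 statements merged into one kernel-verified Lean document; each statement's English description precedes it below -/
import Mathlib

section
/- Verification (suboptimality) inequality: let B : ℝⁿ → ℝ be continuously differentiable and satisfy the Hamilton–Jacobi–Bellman equation H(x, ∇B(x)) = 0 for all x ∈ ℝⁿ. Let T > 0, let u : [0, T] → ℝᵐ be continuous, and let x : [0, T] → ℝⁿ be continuously differentiable with ẋ(t) = f(x(t)) + g(x(t))u(t) for all t ∈ [0, T]. Then B(x(0)) ≤ ∫₀ᵀ [ ε(x(t)) + ⟨u(t), Q(x(t))u(t)⟩ ] dt + B(x(T)). -/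
open Matrix
open scoped RealInnerProductSpace

/-- Matrix–vector product landing in Euclidean space. -/
noncomputable def mulv {n m : ℕ} (A : Matrix (Fin n) (Fin m) ℝ)
    (v : EuclideanSpace ℝ (Fin m)) : EuclideanSpace ℝ (Fin n) :=
  WithLp.toLp 2 (fun i => ∑ j, A i j * v j)

/-- The Hamiltonian `H(x,p) = ε(x) + ⟨p, f(x)⟩ − (1/4)⟨g(x)ᵀp, Q(x)⁻¹ g(x)ᵀp⟩`. -/
noncomputable def Ham {n m : ℕ} (f : EuclideanSpace ℝ (Fin n) → EuclideanSpace ℝ (Fin n))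
    (g : EuclideanSpace ℝ (Fin n) → Matrix (Fin n) (Fin m) ℝ)
    (ε : EuclideanSpace ℝ (Fin n) → ℝ)
    (Q : EuclideanSpace ℝ (Fin n) → Matrix (Fin m) (Fin m) ℝ)
    (x p : EuclideanSpace ℝ (Fin n)) : ℝ :=
  ε x + ⟪p, f x⟫ - (1 / 4 : ℝ) * ⟪mulv (g x)ᵀ p, mulv (Q x)⁻¹ (mulv (g x)ᵀ p)⟫

/-- The optimal feedback value `u*(x,p) = −(1/2) Q(x)⁻¹ g(x)ᵀ p`. -/
noncomputable def ustar {n m : ℕ}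
    (g : EuclideanSpace ℝ (Fin n) → Matrix (Fin n) (Fin m) ℝ)
    (Q : EuclideanSpace ℝ (Fin n) → Matrix (Fin m) (Fin m) ℝ)
    (x p : EuclideanSpace ℝ (Fin n)) : EuclideanSpace ℝ (Fin m) :=
  -((1 / 2 : ℝ) • mulv (Q x)⁻¹ (mulv (g x)ᵀ p))


open scoped Gradient

/-! Along the trajectory, `d/dt B(x t) = ⟪∇B(x t), f(x t) + g(x t) u t⟫`. Completing the square in
the control, `⟪u, Q u⟫ + ⟪gᵀp, u⟫ ≥ -¼ ⟪gᵀp, Q⁻¹ gᵀp⟫`, so the Hamiltonian `H(x, p)` is a lower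
bound for `ε(x) + ⟪u, Q(x) u⟫ + ⟪p, f(x) + g(x) u⟫` over all controls `u`. With `p = ∇B(x)` the
HJB equation makes the left side vanish: the running cost dominates `-d/dt B(x t)`, and integrating
over `[0, T]` gives the inequality. -/

open Set

theorem Matrix.PosDef.dotProduct_mulVec_add_add_quarter_inv_nonneg {ι : Type*} [Fintype ι]
    [DecidableEq ι] {S : Matrix ι ι ℝ} (hS : S.PosDef) (u v : ι → ℝ) :
    0 ≤ u ⬝ᵥ S *ᵥ u + v ⬝ᵥ u + 1 / 4 * (v ⬝ᵥ S⁻¹ *ᵥ v) := by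
  have hSS : S *ᵥ S⁻¹ *ᵥ v = v := by
    rw [mulVec_mulVec, mul_nonsing_inv _ hS.det_pos.ne'.isUnit, one_mulVec]
  have hcross : S⁻¹ *ᵥ v ⬝ᵥ S *ᵥ u = v ⬝ᵥ u := by
    have hsymm : Sᵀ = S := hS.isHermitian.eq
    rw [dotProduct_mulVec, ← mulVec_transpose, hsymm, hSS]
  have hsq : (u + (1 / 2 : ℝ) • S⁻¹ *ᵥ v) ⬝ᵥ S *ᵥ (u + (1 / 2 : ℝ) • S⁻¹ *ᵥ v) =
      u ⬝ᵥ S *ᵥ u + v ⬝ᵥ u + 1 / 4 * (v ⬝ᵥ S⁻¹ *ᵥ v) := by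
    simp only [mulVec_add, mulVec_smul, hSS, add_dotProduct, dotProduct_add, smul_dotProduct,
      dotProduct_smul, hcross, smul_eq_mul, dotProduct_comm u v, dotProduct_comm (S⁻¹ *ᵥ v) v]
    ring
  exact hsq ▸ hS.posSemidef.dotProduct_mulVec_nonneg (u + (1 / 2 : ℝ) • S⁻¹ *ᵥ v)

theorem EuclideanSpace.real_inner_eq_dotProduct {ι : Type*} [Fintype ι]
    (a b : EuclideanSpace ℝ ι) : ⟪a, b⟫ = a.ofLp ⬝ᵥ b.ofLp :=
  dotProduct_comm _ _

section mulv

variable {k l : ℕ}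

theorem ofLp_mulv (A : Matrix (Fin k) (Fin l) ℝ) (b : EuclideanSpace ℝ (Fin l)) :
    (mulv A b).ofLp = A *ᵥ b.ofLp :=
  rfl

theorem ContinuousOn.mulv {α : Type*} [TopologicalSpace α] {s : Set α}
    {A : α → Matrix (Fin k) (Fin l) ℝ} {b : α → EuclideanSpace ℝ (Fin l)}
    (hA : ContinuousOn A s) (hb : ContinuousOn b s) :
    ContinuousOn (fun t => mulv (A t) (b t)) s :=
  ((PiLp.continuous_toLp 2 _).comp (continuous_fst.matrix_mulVec
    ((PiLp.continuous_ofLp 2 _).comp continuous_snd))).comp_continuousOn (hA.prodMk hb)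

end mulv

theorem Ham_le_add_inner {n m : ℕ} (f : EuclideanSpace ℝ (Fin n) → EuclideanSpace ℝ (Fin n))
    (g : EuclideanSpace ℝ (Fin n) → Matrix (Fin n) (Fin m) ℝ)
    (ε : EuclideanSpace ℝ (Fin n) → ℝ)
    (Q : EuclideanSpace ℝ (Fin n) → Matrix (Fin m) (Fin m) ℝ)
    (x p : EuclideanSpace ℝ (Fin n)) (hQ : (Q x).PosDef) (u : EuclideanSpace ℝ (Fin m)) :
    Ham f g ε Q x p ≤ ε x + ⟪u, mulv (Q x) u⟫ + ⟪p, f x + mulv (g x) u⟫ := by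
  have hsq := hQ.dotProduct_mulVec_add_add_quarter_inv_nonneg u.ofLp ((g x)ᵀ *ᵥ p.ofLp)
  have hcross : (g x)ᵀ *ᵥ p.ofLp ⬝ᵥ u.ofLp = p.ofLp ⬝ᵥ g x *ᵥ u.ofLp := by
    rw [mulVec_transpose, dotProduct_mulVec]
  rw [hcross] at hsq
  simp only [Ham, EuclideanSpace.real_inner_eq_dotProduct, ofLp_mulv, WithLp.ofLp_add,
    dotProduct_add]
  linarith

theorem HasGradientAt.comp_hasDerivAt {E : Type*} [NormedAddCommGroup E]
    [InnerProductSpace ℝ E] [CompleteSpace E] {B : E → ℝ} {x : ℝ → E} {p v : E} {t : ℝ}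
    (hB : HasGradientAt B p (x t)) (hx : HasDerivAt x v t) :
    HasDerivAt (fun s => B (x s)) ⟪p, v⟫ t :=
  hB.hasFDerivAt.comp_hasDerivAt t hx

theorem verification_inequality_general {n m : ℕ}
    (f : EuclideanSpace ℝ (Fin n) → EuclideanSpace ℝ (Fin n))
    (g : EuclideanSpace ℝ (Fin n) → Matrix (Fin n) (Fin m) ℝ)
    (ε : EuclideanSpace ℝ (Fin n) → ℝ) (hε : Continuous ε)
    (Q : EuclideanSpace ℝ (Fin n) → Matrix (Fin m) (Fin m) ℝ) (hQc : Continuous Q)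
    (hQ : ∀ x, (Q x).PosDef)
    (B : EuclideanSpace ℝ (Fin n) → ℝ) (hB : ContDiff ℝ 1 B)
    (hHJB : ∀ x, Ham f g ε Q x (∇ B x) = 0)
    (T : ℝ) (hT : 0 < T)
    (u : ℝ → EuclideanSpace ℝ (Fin m)) (hu : ContinuousOn u (Set.Icc 0 T))
    (x : ℝ → EuclideanSpace ℝ (Fin n))
    (hx : ∀ t ∈ Set.Icc (0 : ℝ) T,
      HasDerivWithinAt x (f (x t) + mulv (g (x t)) (u t)) (Set.Icc 0 T) t) :
    B (x 0) ≤ (∫ t in (0 : ℝ)..T, (ε (x t) + ⟪u t, mulv (Q (x t)) (u t)⟫)) + B (x T) := by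
  have hxc : ContinuousOn x (Icc 0 T) := fun t ht => (hx t ht).continuousWithinAt
  have hcost : ContinuousOn (fun t => ε (x t) + ⟪u t, mulv (Q (x t)) (u t)⟫) (Icc 0 T) :=
    (hε.comp_continuousOn hxc).add (hu.inner ((hQc.comp_continuousOn hxc).mulv hu))
  have hderiv : ∀ t ∈ Ioo 0 T, HasDerivWithinAt (fun s => -B (x s))
      (-⟪∇ B (x t), f (x t) + mulv (g (x t)) (u t)⟫) (Ioi t) t := fun t ht =>
    ((hB.differentiable one_ne_zero (x t)).hasGradientAt.comp_hasDerivAt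
      ((hx t (Ioo_subset_Icc_self ht)).hasDerivAt (Icc_mem_nhds ht.1 ht.2))).neg.hasDerivWithinAt
  have hrate : ∀ t ∈ Ioo 0 T, -⟪∇ B (x t), f (x t) + mulv (g (x t)) (u t)⟫ ≤
      ε (x t) + ⟪u t, mulv (Q (x t)) (u t)⟫ := fun t _ => by
    linarith [hHJB (x t), Ham_le_add_inner f g ε Q (x t) (∇ B (x t)) (hQ (x t)) (u t)]
  have hbound := intervalIntegral.sub_le_integral_of_hasDeriv_right_of_le
    (g := fun s => -B (x s)) hT.le (hB.continuous.comp_continuousOn hxc).neg hderiv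
    hcost.integrableOn_Icc hrate
  linarith

/-- verification (suboptimality) inequality.  If `B` is `C¹` and solves
the HJB equation `H(x, ∇B(x)) = 0` for all `x`, then along any trajectory of
`ẋ = f(x) + g(x)u` on `[0,T]` driven by a continuous control `u`,
`B(x(0)) ≤ ∫₀ᵀ [ε(x) + ⟨u, Q(x)u⟩] dt + B(x(T))`. -/
theorem verification_inequality {n m : ℕ} (hn : 0 < n) (hm : 0 < m)
    (f : EuclideanSpace ℝ (Fin n) → EuclideanSpace ℝ (Fin n)) (hf : Continuous f)
    (g : EuclideanSpace ℝ (Fin n) → Matrix (Fin n) (Fin m) ℝ) (hg : Continuous g)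
    (ε : EuclideanSpace ℝ (Fin n) → ℝ) (hε : Continuous ε)
    (Q : EuclideanSpace ℝ (Fin n) → Matrix (Fin m) (Fin m) ℝ) (hQc : Continuous Q)
    (hQ : ∀ x, (Q x).PosDef)
    (B : EuclideanSpace ℝ (Fin n) → ℝ) (hB : ContDiff ℝ 1 B)
    (hHJB : ∀ x, Ham f g ε Q x (∇ B x) = 0)
    (T : ℝ) (hT : 0 < T)
    (u : ℝ → EuclideanSpace ℝ (Fin m)) (hu : ContinuousOn u (Set.Icc 0 T))
    (x : ℝ → EuclideanSpace ℝ (Fin n))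
    (hx : ∀ t ∈ Set.Icc (0 : ℝ) T,
      HasDerivWithinAt x (f (x t) + mulv (g (x t)) (u t)) (Set.Icc 0 T) t) :
    B (x 0) ≤ (∫ t in (0 : ℝ)..T, (ε (x t) + ⟪u t, mulv (Q (x t)) (u t)⟫)) + B (x T) :=
  verification_inequality_general f g ε hε Q hQc hQ B hB hHJB T hT u hu x hx
end

section
/- Dynamic programming equality along the optimal feedback: let B : ℝⁿ → ℝ be continuously differentiable and satisfy H(x, ∇B(x)) = 0 for all x ∈ ℝⁿ, and define u_B(x) = −(1/2)Q(x)⁻¹g(x)ᵀ∇B(x). Let T > 0 and let x : [0, T] → ℝⁿ be continuously differentiable with ẋ(t) = f(x(t)) + g(x(t))u_B(x(t)) for all t ∈ [0, T]. Then B(x(0)) = ∫₀ᵀ [ ε(x(t)) + ⟨u_B(x(t)), Q(x(t))u_B(x(t))⟩ ] dt + B(x(T)); that is, the closed-loop trajectory of the feedback u_B attains the cost bound with equality. -/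
/-! Along the closed loop the chain rule gives `d/dt B(x(t)) = ⟪∇B, f + g u_B⟫`. With
`q = ⟪gᵀ∇B, Q⁻¹gᵀ∇B⟫` one computes `⟪∇B, g u_B⟫ = -q/2` and `⟪u_B, Q u_B⟫ = q/4`, so the HJB
equation `ε + ⟪∇B, f⟫ = q/4` turns the derivative into `-(ε + ⟪u_B, Q u_B⟫)`; integrate over
`[0, T]`. -/

open Matrix
open scoped RealInnerProductSpace

open scoped Gradient

section MatrixVector

variable {n m : ℕ}

theorem mulv_eq_toLp_mulVec (A : Matrix (Fin n) (Fin m) ℝ) (v : EuclideanSpace ℝ (Fin m)) :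
    mulv A v = WithLp.toLp 2 (A *ᵥ WithLp.ofLp v) := rfl

theorem mulv_smul (A : Matrix (Fin n) (Fin m) ℝ) (c : ℝ) (v : EuclideanSpace ℝ (Fin m)) :
    mulv A (c • v) = c • mulv A v := by
  simp [mulv_eq_toLp_mulVec, mulVec_smul]

theorem mulv_neg (A : Matrix (Fin n) (Fin m) ℝ) (v : EuclideanSpace ℝ (Fin m)) :
    mulv A (-v) = -mulv A v := by
  simp [mulv_eq_toLp_mulVec, mulVec_neg]

theorem mulv_mulv_nonsing_inv {A : Matrix (Fin n) (Fin n) ℝ} (hA : IsUnit A.det)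
    (v : EuclideanSpace ℝ (Fin n)) : mulv A (mulv A⁻¹ v) = v := by
  simp [mulv_eq_toLp_mulVec, mulVec_mulVec, mul_nonsing_inv A hA]

theorem inner_mulv_right (A : Matrix (Fin n) (Fin m) ℝ) (p : EuclideanSpace ℝ (Fin n))
    (u : EuclideanSpace ℝ (Fin m)) : ⟪p, mulv A u⟫ = ⟪mulv Aᵀ p, u⟫ := by
  simp only [EuclideanSpace.inner_eq_star_dotProduct, mulv_eq_toLp_mulVec, star_trivial,
    dotProduct_mulVec, vecMul_transpose, dotProduct_comm]

end MatrixVector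

theorem DifferentiableAt.hasDerivWithinAt_comp_of_gradient {F : Type*} [NormedAddCommGroup F]
    [InnerProductSpace ℝ F] [CompleteSpace F] {B : F → ℝ} {γ : ℝ → F} {γ' : F} {s : Set ℝ}
    {t : ℝ} (hB : DifferentiableAt ℝ B (γ t)) (hγ : HasDerivWithinAt γ γ' s t) :
    HasDerivWithinAt (fun τ => B (γ τ)) ⟪∇ B (γ t), γ'⟫ s t := by
  rw [inner_gradient_left]
  exact hB.hasFDerivAt.comp_hasDerivWithinAt t hγ

theorem intervalIntegral.integral_eq_sub_of_hasDerivWithinAt_Icc {E : Type*}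
    [NormedAddCommGroup E] [NormedSpace ℝ E] [CompleteSpace E] {F φ : ℝ → E} {a b : ℝ}
    (hab : a ≤ b) (hF : ∀ t ∈ Set.Icc a b, HasDerivWithinAt F (φ t) (Set.Icc a b) t)
    (hφ : ContinuousOn φ (Set.Icc a b)) :
    ∫ t in a..b, φ t = F b - F a :=
  integral_eq_sub_of_hasDeriv_right_of_le hab (fun t ht => (hF t ht).continuousWithinAt)
    (fun t ht => (hF t (Set.Ioo_subset_Icc_self ht)).mono_of_mem_nhdsWithin
      (Icc_mem_nhdsGT_of_mem ⟨ht.1.le, ht.2⟩))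
    (hφ.intervalIntegrable_of_Icc hab)

section Feedback

variable {n m : ℕ} {f : EuclideanSpace ℝ (Fin n) → EuclideanSpace ℝ (Fin n)}
  {g : EuclideanSpace ℝ (Fin n) → Matrix (Fin n) (Fin m) ℝ} {ε : EuclideanSpace ℝ (Fin n) → ℝ}
  {Q : EuclideanSpace ℝ (Fin n) → Matrix (Fin m) (Fin m) ℝ} {x p : EuclideanSpace ℝ (Fin n)}

theorem inner_mulv_ustar :
    ⟪p, mulv (g x) (ustar g Q x p)⟫ =
      -(1 / 2 : ℝ) * ⟪mulv (g x)ᵀ p, mulv (Q x)⁻¹ (mulv (g x)ᵀ p)⟫ := by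
  rw [ustar, mulv_neg, mulv_smul, inner_neg_right, real_inner_smul_right, inner_mulv_right]
  ring

theorem inner_ustar_mulv_ustar (hQ : IsUnit (Q x).det) :
    ⟪ustar g Q x p, mulv (Q x) (ustar g Q x p)⟫ =
      (1 / 4 : ℝ) * ⟪mulv (g x)ᵀ p, mulv (Q x)⁻¹ (mulv (g x)ᵀ p)⟫ := by
  rw [ustar, mulv_neg, mulv_smul, mulv_mulv_nonsing_inv hQ, inner_neg_neg, real_inner_smul_left,
    real_inner_smul_right, real_inner_comm]
  ring

theorem inner_ustar_mulv_ustar_of_ham_eq_zero (hQ : IsUnit (Q x).det)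
    (hH : Ham f g ε Q x p = 0) :
    ⟪ustar g Q x p, mulv (Q x) (ustar g Q x p)⟫ = ε x + ⟪p, f x⟫ := by
  rw [inner_ustar_mulv_ustar hQ]
  rw [Ham] at hH
  linarith

theorem inner_closedLoop_ustar_of_ham_eq_zero (hQ : IsUnit (Q x).det)
    (hH : Ham f g ε Q x p = 0) :
    ⟪p, f x + mulv (g x) (ustar g Q x p)⟫ =
      -(ε x + ⟪ustar g Q x p, mulv (Q x) (ustar g Q x p)⟫) := by
  rw [inner_add_right, inner_mulv_ustar, inner_ustar_mulv_ustar hQ]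
  rw [Ham] at hH
  linarith

end Feedback

theorem ContDiff.continuous_gradient {F : Type*} [NormedAddCommGroup F] [InnerProductSpace ℝ F]
    [CompleteSpace F] {B : F → ℝ} (hB : ContDiff ℝ 1 B) : Continuous (∇ B) :=
  (InnerProductSpace.toDual ℝ F).symm.continuous.comp (hB.continuous_fderiv one_ne_zero)

theorem dynamic_programming_equality_general {n m : ℕ}
    (f : EuclideanSpace ℝ (Fin n) → EuclideanSpace ℝ (Fin n)) (hf : Continuous f)
    (g : EuclideanSpace ℝ (Fin n) → Matrix (Fin n) (Fin m) ℝ)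
    (ε : EuclideanSpace ℝ (Fin n) → ℝ) (hε : Continuous ε)
    (Q : EuclideanSpace ℝ (Fin n) → Matrix (Fin m) (Fin m) ℝ)
    (hQ : ∀ x, (Q x).PosDef)
    (B : EuclideanSpace ℝ (Fin n) → ℝ) (hB : ContDiff ℝ 1 B)
    (hHJB : ∀ x, Ham f g ε Q x (∇ B x) = 0)
    (uB : EuclideanSpace ℝ (Fin n) → EuclideanSpace ℝ (Fin m))
    (huB : ∀ x, uB x = ustar g Q x (∇ B x))
    (T : ℝ) (hT : 0 < T)
    (x : ℝ → EuclideanSpace ℝ (Fin n))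
    (hx : ∀ t ∈ Set.Icc (0 : ℝ) T,
      HasDerivWithinAt x (f (x t) + mulv (g (x t)) (uB (x t))) (Set.Icc 0 T) t) :
    B (x 0) =
      (∫ t in (0 : ℝ)..T, (ε (x t) + ⟪uB (x t), mulv (Q (x t)) (uB (x t))⟫)) + B (x T) := by
  have hQ_det (y) : IsUnit (Q y).det := (Matrix.isUnit_iff_isUnit_det _).mp (hQ y).isUnit
  have hderiv : ∀ t ∈ Set.Icc 0 T, HasDerivWithinAt (fun s => B (x s))
      (-(ε (x t) + ⟪uB (x t), mulv (Q (x t)) (uB (x t))⟫)) (Set.Icc 0 T) t := by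
    intro t ht
    have hxt := hx t ht
    rw [huB] at hxt ⊢
    rw [← inner_closedLoop_ustar_of_ham_eq_zero (hQ_det _) (hHJB _)]
    exact (hB.differentiable one_ne_zero _).hasDerivWithinAt_comp_of_gradient hxt
  -- By the HJB equation the running cost along `u_B` is `2ε + ⟪∇B, f⟫`, visibly continuous.
  have hcost (y) : ε y + ⟪uB y, mulv (Q y) (uB y)⟫ = 2 * ε y + ⟪∇ B y, f y⟫ := by
    rw [huB, inner_ustar_mulv_ustar_of_ham_eq_zero (hQ_det y) (hHJB y)]
    ring
  have hcont : ContinuousOn (fun t => -(ε (x t) + ⟪uB (x t), mulv (Q (x t)) (uB (x t))⟫))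
      (Set.Icc 0 T) := by
    simp only [hcost]
    exact (((continuous_const.mul hε).add (hB.continuous_gradient.inner hf)).comp_continuousOn
      fun t ht => (hx t ht).continuousWithinAt).neg
  have hFTC := intervalIntegral.integral_eq_sub_of_hasDerivWithinAt_Icc hT.le hderiv hcont
  rw [intervalIntegral.integral_neg] at hFTC
  linarith

/-- dynamic programming equality along the optimal feedback.  If `B` is
`C¹` and solves the HJB equation, then along any closed-loop trajectory of the
feedback `u_B(x) = −(1/2)Q(x)⁻¹g(x)ᵀ∇B(x)` on `[0,T]`,
`B(x(0)) = ∫₀ᵀ [ε(x) + ⟨u_B(x), Q(x)u_B(x)⟩] dt + B(x(T))`. -/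
theorem dynamic_programming_equality {n m : ℕ} (hn : 0 < n) (hm : 0 < m)
    (f : EuclideanSpace ℝ (Fin n) → EuclideanSpace ℝ (Fin n)) (hf : Continuous f)
    (g : EuclideanSpace ℝ (Fin n) → Matrix (Fin n) (Fin m) ℝ) (hg : Continuous g)
    (ε : EuclideanSpace ℝ (Fin n) → ℝ) (hε : Continuous ε)
    (Q : EuclideanSpace ℝ (Fin n) → Matrix (Fin m) (Fin m) ℝ) (hQc : Continuous Q)
    (hQ : ∀ x, (Q x).PosDef)
    (B : EuclideanSpace ℝ (Fin n) → ℝ) (hB : ContDiff ℝ 1 B)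
    (hHJB : ∀ x, Ham f g ε Q x (∇ B x) = 0)
    (uB : EuclideanSpace ℝ (Fin n) → EuclideanSpace ℝ (Fin m))
    (huB : ∀ x, uB x = ustar g Q x (∇ B x))
    (T : ℝ) (hT : 0 < T)
    (x : ℝ → EuclideanSpace ℝ (Fin n))
    (hx : ∀ t ∈ Set.Icc (0 : ℝ) T,
      HasDerivWithinAt x (f (x t) + mulv (g (x t)) (uB (x t))) (Set.Icc 0 T) t) :
    B (x 0) =
      (∫ t in (0 : ℝ)..T, (ε (x t) + ⟪uB (x t), mulv (Q (x t)) (uB (x t))⟫)) + B (x T) :=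
  dynamic_programming_equality_general f hf g ε hε Q hQ B hB hHJB uB huB T hT x hx
end
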